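/- (Harary's theorem) A signed graph Σ is balanced if and only if its vertex set can be partitioned into two (possibly empty) sets such that every positive edge has both endpoints in the same part and every negative edge has its endpoints in different parts. -/

import Mathlib

open SimpleGraph
open scoped Classical

variable {V : Type*}

/-- The sign of a walk: the product of the signs of its edges. -/
def walkSign (σ : Sym2 V → ℤˣ) {G : SimpleGraph V} {u v : V} (w : G.Walk u v) : ℤˣ :=
  (w.edges.map σ).prod

/-- A signed graph is balanced if every cycle (circle) has positive sign. -/
def IsBalanced (G : SimpleGraph V) (σ : Sym2 V → ℤˣ) : Prop :=
  ∀ (v : V) (w : G.Walk v v), w.IsCycle → walkSign σ w = 1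

/-- The sign function induced on an induced subgraph. -/
def induceSign (σ : Sym2 V → ℤˣ) (X : Set V) : Sym2 ↥X → ℤˣ :=
  fun e => σ (e.map Subtype.val)

/-- Frustration index: minimum number of edges to delete to obtain balance. -/
noncomputable def frustrationIndex (G : SimpleGraph V) (σ : Sym2 V → ℤˣ) : ℕ :=
  sInf {n | ∃ s : Finset (Sym2 V), s.card = n ∧ IsBalanced (G.deleteEdges ↑s) σ}

/-- Frustration number: minimum number of vertices to delete to obtain balance. -/
noncomputable def frustrationNumber (G : SimpleGraph V) (σ : Sym2 V → ℤˣ) : ℕ :=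
  sInf {n | ∃ X : Finset V, X.card = n ∧
    IsBalanced (G.induce ((↑X : Set V)ᶜ)) (induceSign σ ((↑X : Set V)ᶜ))}

/-- The sign function obtained by switching at a vertex `v`:
negate the sign of every (non-loop) edge incident to `v`. -/
noncomputable def switchSign (σ : Sym2 V → ℤˣ) (v : V) : Sym2 V → ℤˣ :=
  fun e => if v ∈ e then -σ e else σ e

/-- `τ` is obtained from `σ` by switching at `v` (as signatures of `G`). -/
def SwitchedAt (G : SimpleGraph V) (σ τ : Sym2 V → ℤˣ) (v : V) : Prop :=
  ∀ e ∈ G.edgeSet, τ e = switchSign σ v e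

/-- Switching equivalence: related by a finite sequence of switchings. -/
def SwitchEquiv (G : SimpleGraph V) : (Sym2 V → ℤˣ) → (Sym2 V → ℤˣ) → Prop :=
  Relation.ReflTransGen (fun σ τ => ∃ v, SwitchedAt G σ τ v)

section Aux

variable {G : SimpleGraph V} {σ : Sym2 V → ℤˣ}

lemma walkSign_nil {u : V} : walkSign σ (SimpleGraph.Walk.nil : G.Walk u u) = 1 := rfl

lemma walkSign_cons {u v w : V} (h : G.Adj u v) (p : G.Walk v w) :
    walkSign σ (SimpleGraph.Walk.cons h p) = σ s(u, v) * walkSign σ p := by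
  simp [walkSign]

lemma walkSign_append {u v w : V} (p : G.Walk u v) (q : G.Walk v w) :
    walkSign σ (p.append q) = walkSign σ p * walkSign σ q := by
  simp [walkSign, SimpleGraph.Walk.edges_append]

lemma walkSign_reverse {u v : V} (p : G.Walk u v) :
    walkSign σ p.reverse = walkSign σ p := by
  simp [walkSign, SimpleGraph.Walk.edges_reverse, List.map_reverse, List.prod_reverse]

/-- A closed walk whose tail is a path has sign 1, if the graph is balanced. -/
lemma walkSign_cons_path (hb : IsBalanced G σ) {u v : V} (h : G.Adj u v)
    (q : G.Walk v u) (hq : q.IsPath) :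
    walkSign σ (SimpleGraph.Walk.cons h q) = 1 := by
  by_cases he : s(u, v) ∈ q.edges
  · -- then q must be the single edge from v to u
    cases q with
    | nil => simp at he
    | cons h' r =>
      rename_i x
      rw [SimpleGraph.Walk.edges_cons, List.mem_cons] at he
      rcases he with he | he
      · -- s(u,v) = s(v,x), so x = u and r : Walk u u is a path, hence nil
        have hx : x = u := by
          rw [Sym2.eq_iff] at he
          rcases he with ⟨h1, h2⟩ | ⟨h1, h2⟩
          · exact absurd h1 (G.ne_of_adj h)
          · exact h1.symm
        subst hx
        have hr : r = SimpleGraph.Walk.nil :=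
          SimpleGraph.Walk.isPath_iff_eq_nil.mp hq.of_cons
        subst hr
        rw [walkSign_cons, walkSign_cons, walkSign_nil, mul_one, Sym2.eq_swap]
        exact Int.units_mul_self _
      · -- s(u,v) ∈ r.edges, so v ∈ r.support, contradicting nodup support
        exfalso
        have hv : v ∈ r.support := SimpleGraph.Walk.snd_mem_support_of_mem_edges r he
        have := hq.support_nodup
        rw [SimpleGraph.Walk.support_cons, List.nodup_cons] at this
        exact this.1 hv
  · exact hb u (SimpleGraph.Walk.cons h q) ((SimpleGraph.Walk.cons_isCycle_iff q h).mpr ⟨hq, he⟩)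

lemma walkSign_bypass (hb : IsBalanced G σ) {u v : V} (p : G.Walk u v) :
    walkSign σ p.bypass = walkSign σ p := by
  classical
  induction p with
  | nil => rfl
  | cons ha p ih =>
    rename_i w x _
    rw [SimpleGraph.Walk.bypass]
    split_ifs with hs
    · -- bypass = p.bypass.dropUntil
      have hspec := SimpleGraph.Walk.take_spec p.bypass hs
      have h1 : walkSign σ (p.bypass.takeUntil w hs) * walkSign σ (p.bypass.dropUntil w hs)
          = walkSign σ p.bypass := by
        rw [← walkSign_append, hspec]
      have h2 : walkSign σ (SimpleGraph.Walk.cons ha (p.bypass.takeUntil w hs)) = 1 :=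
        walkSign_cons_path hb ha _ ((SimpleGraph.Walk.bypass_isPath p).takeUntil hs)
      rw [walkSign_cons] at h2
      rw [walkSign_cons, ← ih, ← h1, ← mul_assoc, h2, one_mul]
    · rw [walkSign_cons, walkSign_cons, ih]

lemma walkSign_closed (hb : IsBalanced G σ) {v : V} (w : G.Walk v v) :
    walkSign σ w = 1 := by
  rw [← walkSign_bypass hb]
  have := SimpleGraph.Walk.isPath_iff_eq_nil.mp (SimpleGraph.Walk.bypass_isPath w)
  rw [this]; rfl

lemma walkSign_unique (hb : IsBalanced G σ) {u v : V} (p q : G.Walk u v) :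
    walkSign σ p = walkSign σ q := by
  have h1 : walkSign σ p * walkSign σ q = 1 := by
    rw [← walkSign_reverse q, ← walkSign_append]
    exact walkSign_closed hb _
  have h2 : walkSign σ q * walkSign σ q = 1 := Int.units_mul_self _
  calc walkSign σ p = walkSign σ p * (walkSign σ q * walkSign σ q) := by rw [h2, mul_one]
    _ = (walkSign σ p * walkSign σ q) * walkSign σ q := (mul_assoc _ _ _).symm
    _ = walkSign σ q := by rw [h1, one_mul]

lemma walkSign_eq_potential {f : V → ℤˣ}
    (hf : ∀ a b : V, G.Adj a b → σ s(a, b) = f a * f b) {u v : V} (p : G.Walk u v) :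
    walkSign σ p = f u * f v := by
  induction p with
  | nil => exact (Int.units_mul_self _).symm
  | cons ha p ih =>
    rw [walkSign_cons, ih, hf _ _ ha, mul_assoc]
    congr 1
    rw [← mul_assoc, Int.units_mul_self, one_mul]

end Aux

/-- Harary's theorem: a signed graph is balanced iff its vertex set can be
partitioned into two sets so that positive edges lie within parts and negative
edges go across. -/
theorem harary_balance {V : Type*} [Fintype V]
    (G : SimpleGraph V) (σ : Sym2 V → ℤˣ) :
    IsBalanced G σ ↔
      ∃ A : Set V, ∀ u v : V, G.Adj u v → (σ s(u, v) = 1 ↔ ((u ∈ A) ↔ (v ∈ A))) := by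
  classical
  constructor
  · intro hb
    -- build a potential f : V → ℤˣ using walks to component representatives
    have hreach : ∀ v : V, G.Reachable v (G.connectedComponentMk v).out := by
      intro v
      have : G.connectedComponentMk (G.connectedComponentMk v).out = G.connectedComponentMk v :=
        (G.connectedComponentMk v).out_eq
      exact (SimpleGraph.ConnectedComponent.exact this).symm
    set f : V → ℤˣ := fun v => walkSign σ (hreach v).some with hfdef
    have hwalk : ∀ v : V, ∀ (p : G.Walk v (G.connectedComponentMk v).out),
        f v = walkSign σ p := by
      intro v p
      exact walkSign_unique hb _ p
    have key : ∀ u v : V, G.Adj u v → σ s(u, v) = f u * f v := by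
      intro u v huv
      have hcomp : (G.connectedComponentMk u) = (G.connectedComponentMk v) :=
        SimpleGraph.ConnectedComponent.sound huv.reachable
      obtain ⟨q⟩ := hreach v
      have hq : f v = walkSign σ q := hwalk v q
      -- cons huv q : Walk u _ , after fixing the endpoint via hcomp
      have hout : (G.connectedComponentMk v).out = (G.connectedComponentMk u).out := by
        rw [hcomp]
      have hp : f u = walkSign σ ((SimpleGraph.Walk.cons huv q).copy rfl hout) := hwalk u _
      rw [walkSign] at hp
      rw [SimpleGraph.Walk.edges_copy] at hp
      have hp' : f u = σ s(u, v) * walkSign σ q := by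
        rw [hp]; simp [walkSign]
      rw [hp', ← hq, mul_assoc, Int.units_mul_self, mul_one]
    refine ⟨{v | f v = 1}, fun u v huv => ?_⟩
    rw [key u v huv]
    simp only [Set.mem_setOf_eq]
    rcases Int.units_eq_one_or (f u) with h1 | h1 <;>
      rcases Int.units_eq_one_or (f v) with h2 | h2 <;>
        simp [h1, h2]
  · rintro ⟨A, hA⟩
    set f : V → ℤˣ := fun v => if v ∈ A then 1 else -1 with hfdef
    have hf : ∀ a b : V, G.Adj a b → σ s(a, b) = f a * f b := by
      intro a b hab
      have := hA a b hab
      rcases Int.units_eq_one_or (σ s(a, b)) with h1 | h1 <;> rw [h1]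
      · have : (a ∈ A) ↔ (b ∈ A) := this.mp h1
        by_cases ha : a ∈ A
        · simp [hfdef, ha, this.mp ha]
        · have hb : b ∉ A := fun h => ha (this.mpr h)
          simp [hfdef, ha, hb]
      · have hne : ¬((a ∈ A) ↔ (b ∈ A)) := by
          intro h
          have := this.mpr h
          rw [h1] at this
          exact absurd this (by decide)
        by_cases ha : a ∈ A
        · have hb : b ∉ A := fun hb => hne ⟨fun _ => hb, fun _ => ha⟩
          simp [hfdef, ha, hb]
        · have hb : b ∈ A := by
            by_contra hb
            exact hne ⟨fun h => absurd h ha, fun h => absurd h hb⟩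
          simp [hfdef, ha, hb]
    intro v w _
    rw [walkSign_eq_potential hf, Int.units_mul_self]
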